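/- Let O_1, ..., O_n (n ≥ 1) be pairwise independent real-valued random variables with E[O_i] = λ_i and Var[O_i] = σ² for each i, and let p = (1/n)·Σ_j O_j be the common prediction assigned to every sample in the bin. Then the expected mean squared error of the bin prediction satisfies E[(1/n)·Σ_i (λ_i − p)²] = (1/n)·Σ_i (λ_i − λ̄)² + σ²/n, where λ̄ = (1/n)·Σ_i λ_i. In particular the expected correctness of common discretization equals the population variance of the ground-truth values λ_1, ..., λ_n plus σ²/n. -/

import Mathlib

open MeasureTheory ProbabilityTheory Finset

/-!
Since `λ̄` is the mean of the `λ i`, the deviations `λ i - λ̄` sum to zero, so for any value `c`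
the squared deviations split as `∑ (λ i - c)² = ∑ (λ i - λ̄)² + n (c - λ̄)²`. Taking `c = p` and
integrating leaves `E[(p - λ̄)²]`, which is the variance of `p` because `E[p] = λ̄`. Pairwise independence
makes the variance of the sum additive, so `Var p = n σ² / n² = σ² / n`.
-/

theorem Finset.sum_sq_sub_eq_sum_sq_sub_add {ι R : Type*} [CommRing R] (s : Finset ι)
    (x : ι → R) {m : R} (hm : ∑ i ∈ s, x i = #s * m) (c : R) :
    ∑ i ∈ s, (x i - c) ^ 2 = ∑ i ∈ s, (x i - m) ^ 2 + #s * (c - m) ^ 2 := by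
  have hdev : ∑ i ∈ s, (x i - m) = 0 := by simp [sum_sub_distrib, hm]
  calc ∑ i ∈ s, (x i - c) ^ 2
      = ∑ i ∈ s, ((x i - m) ^ 2 + 2 * (m - c) * (x i - m) + (c - m) ^ 2) :=
        sum_congr rfl fun i _ => by ring
    _ = ∑ i ∈ s, (x i - m) ^ 2 + #s * (c - m) ^ 2 := by
        rw [sum_add_distrib, sum_add_distrib, ← mul_sum, hdev]
        simp

namespace ProbabilityTheory

variable {Ω : Type*} [MeasurableSpace Ω] {μ : Measure Ω}

theorem integral_sq_sub_const [IsProbabilityMeasure μ] {X : Ω → ℝ} (hX : MemLp X 2 μ)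
    (c : ℝ) : ∫ ω, (X ω - c) ^ 2 ∂μ = variance X μ + (μ[X] - c) ^ 2 := by
  have hXc : MemLp (fun ω => X ω - c) 2 μ := hX.sub (memLp_const c)
  rw [← variance_sub_const hX.aestronglyMeasurable c, variance_eq_sub hXc,
    integral_sub (hX.integrable one_le_two) (integrable_const c)]
  simp

theorem variance_avg_of_pairwise_indepFun {ι : Type*} {s : Finset ι} {X : ι → Ω → ℝ}
    {σ2 : ℝ} (hX : ∀ i ∈ s, MemLp (X i) 2 μ)
    (hindep : Set.Pairwise ↑s fun i j => IndepFun (X i) (X j) μ)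
    (hvar : ∀ i ∈ s, variance (X i) μ = σ2) :
    variance (fun ω => (1 / #s : ℝ) * ∑ i ∈ s, X i ω) μ = σ2 / #s := by
  rw [variance_const_mul, ← sum_fn, IndepFun.variance_sum hX hindep, sum_congr rfl hvar,
    sum_const, nsmul_eq_mul]
  rcases eq_or_ne (#s : ℝ) 0 with h | h
  · simp [h]
  · field_simp

end ProbabilityTheory

theorem expected_correctness_common_discretization_general
    {Ω : Type*} [MeasurableSpace Ω] (μ : Measure Ω) [IsProbabilityMeasure μ]
    (n : ℕ) (O : Fin n → Ω → ℝ) (lam : Fin n → ℝ) (σ2 : ℝ)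
    (hL2 : ∀ i, MemLp (O i) 2 μ)
    (hmean : ∀ i, ∫ ω, O i ω ∂μ = lam i)
    (hvar : ∀ i, variance (O i) μ = σ2)
    (hindep : Pairwise fun i j => IndepFun (O i) (O j) μ)
    (p : Ω → ℝ) (hp : ∀ ω, p ω = (1 / n : ℝ) * ∑ j, O j ω)
    (lbar : ℝ) (hlbar : lbar = (1 / n : ℝ) * ∑ i, lam i) :
    ∫ ω, (1 / n : ℝ) * ∑ i, (lam i - p ω) ^ 2 ∂μ
      = (1 / n : ℝ) * ∑ i, (lam i - lbar) ^ 2 + σ2 / n := by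
  obtain rfl | hn := Nat.eq_zero_or_pos n
  · simp
  have hp_avg : p = fun ω => (1 / #(univ : Finset (Fin n)) : ℝ) * ∑ j, O j ω := by
    funext ω; simp [hp]
  have hpL2 : MemLp p 2 μ := by
    rw [hp_avg]; exact (memLp_finsetSum _ fun i _ => hL2 i).const_mul _
  have hmean_p : μ[p] = lbar := by
    simp only [hp, hlbar, integral_const_mul, ← hmean]
    rw [integral_finsetSum _ fun i _ => (hL2 i).integrable one_le_two]
  have hvar_p : variance p μ = σ2 / n := by
    rw [hp_avg, variance_avg_of_pairwise_indepFun (fun i _ => hL2 i)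
      (fun i _ j _ hij => hindep hij) (fun i _ => hvar i)]
    simp
  have hsum_lam : ∑ i, lam i = #(univ : Finset (Fin n)) * lbar := by
    rw [card_univ, Fintype.card_fin, hlbar]
    field_simp
  have hdecomp : ∀ ω, (1 / n : ℝ) * ∑ i, (lam i - p ω) ^ 2
      = (1 / n : ℝ) * ∑ i, (lam i - lbar) ^ 2 + (p ω - lbar) ^ 2 := by
    intro ω
    rw [sum_sq_sub_eq_sum_sq_sub_add _ lam hsum_lam, card_univ, Fintype.card_fin]
    field_simp
  have hint : Integrable (fun ω => (p ω - lbar) ^ 2) μ :=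
    (hpL2.sub (memLp_const lbar)).integrable_sq
  simp_rw [hdecomp]
  rw [integral_add (integrable_const _) hint,
    integral_const, integral_sq_sub_const hpL2, hmean_p, hvar_p]
  simp

/-- For pairwise independent observations `O i` with mean `lam i` and
variance `σ²`, and common bin prediction `p = (1/n) ∑ⱼ O j`, the expected mean squared
error equals the population variance of the ground-truth values plus `σ²/n`. -/
theorem expected_correctness_common_discretization
    {Ω : Type*} [MeasurableSpace Ω] (μ : Measure Ω) [IsProbabilityMeasure μ]
    (n : ℕ) (hn : 1 ≤ n) (O : Fin n → Ω → ℝ) (lam : Fin n → ℝ) (σ2 : ℝ)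
    (hL2 : ∀ i, MemLp (O i) 2 μ)
    (hmean : ∀ i, ∫ ω, O i ω ∂μ = lam i)
    (hvar : ∀ i, variance (O i) μ = σ2)
    (hindep : Pairwise fun i j => IndepFun (O i) (O j) μ)
    (p : Ω → ℝ) (hp : ∀ ω, p ω = (1 / n : ℝ) * ∑ j, O j ω)
    (lbar : ℝ) (hlbar : lbar = (1 / n : ℝ) * ∑ i, lam i) :
    ∫ ω, (1 / n : ℝ) * ∑ i, (lam i - p ω) ^ 2 ∂μ
      = (1 / n : ℝ) * ∑ i, (lam i - lbar) ^ 2 + σ2 / n :=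
  expected_correctness_common_discretization_general μ n O lam σ2 hL2 hmean hvar hindep p hp lbar
    hlbar
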